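/- For any two density operators ρ₀ and ρ₁ on a finite-dimensional Hilbert space, 1 - (1/2)‖ρ₀ - ρ₁‖₁ ≤ F(ρ₀, ρ₁) ≤ sqrt(1 - (1/4)‖ρ₀ - ρ₁‖₁²), where F(ρ₀,ρ₁) = ‖√ρ₀ √ρ₁‖₁ is the fidelity and ‖·‖₁ is the trace norm. -/

import Mathlib

open Matrix
open scoped ComplexOrder

/-- The square root of a positive semidefinite matrix (as `Matrix.PosSemidef.sqrt` was defined in
Mathlib of December 2024; it has since been removed from Mathlib). -/
noncomputable def Matrix.PosSemidef.sqrt {n : Type*} [Fintype n] [DecidableEq n] {𝕜 : Type*}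
    [RCLike 𝕜] {A : Matrix n n 𝕜} (hA : A.PosSemidef) : Matrix n n 𝕜 :=
  hA.1.eigenvectorUnitary.1 * diagonal ((↑) ∘ (√·) ∘ hA.1.eigenvalues) *
  (star hA.1.eigenvectorUnitary : Matrix n n 𝕜)

/-- The trace norm of a matrix: `tr √(AᴴA)`, i.e. the sum of singular values. -/
noncomputable def traceNorm {n : Type*} [Fintype n] [DecidableEq n]
    (A : Matrix n n ℂ) : ℝ :=
  ((Matrix.posSemidef_conjTranspose_mul_self A).sqrt.trace).re

/-- The fidelity `F(ρ,σ) = ‖√ρ √σ‖₁` of two positive semidefinite matrices. -/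
noncomputable def fidelity {n : Type*} [Fintype n] [DecidableEq n]
    {ρ σ : Matrix n n ℂ} (hρ : ρ.PosSemidef) (hσ : σ.PosSemidef) : ℝ :=
  traceNorm (hρ.sqrt * hσ.sqrt)

/-- A density operator: PSD with unit trace. -/
def IsDensity {n : Type*} [Fintype n] [DecidableEq n] (ρ : Matrix n n ℂ) : Prop :=
  ρ.PosSemidef ∧ ρ.trace = 1

/-!
The trace norm is dual to the operator norm: `Re tr (W A) ≤ ‖A‖₁` whenever `W Wᴴ ≤ 1`, with
equality for `W = (AᴴA)^{-1/2} Aᴴ`. This gives the triangle inequality and the Hölder bound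
`‖B C‖₁ ≤ ‖B‖₂ ‖C‖₂` for the Frobenius norm.

Lower bound: `tr (√ρ₀ - √ρ₁)² = 2 - 2 Re tr (√ρ₀ √ρ₁) ≥ 2 - 2 F(ρ₀, ρ₁)`, and the Powers–Størmer
inequality bounds the left side by `‖ρ₀ - ρ₁‖₁`.

Upper bound: let `E` be the spectral projection onto the nonnegative part of `ρ₀ - ρ₁` and
`p = tr E ρ₀`, `q = tr E ρ₁`, so that `p - q = ½ ‖ρ₀ - ρ₁‖₁`. Splitting
`√ρ₀ √ρ₁ = √ρ₀ E √ρ₁ + √ρ₀ (1 - E) √ρ₁` and applying Hölder to each part gives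
`F(ρ₀, ρ₁) ≤ √(p q) + √((1 - p) (1 - q)) ≤ √(1 - (p - q)²)`.
-/

open scoped MatrixOrder InnerProductSpace

namespace Matrix

variable {n : Type*} [Fintype n]

lemma re_trace_nonneg {X : Matrix n n ℂ} (hX : 0 ≤ X) : 0 ≤ X.trace.re :=
  (Complex.nonneg_iff.mp (nonneg_iff_posSemidef.mp hX).trace_nonneg).1

lemma re_trace_le_re_trace {X Y : Matrix n n ℂ} (h : X ≤ Y) : X.trace.re ≤ Y.trace.re := by
  have := re_trace_nonneg (sub_nonneg.mpr h)
  rwa [trace_sub, Complex.sub_re, sub_nonneg] at this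

variable [DecidableEq n]

lemma PosSemidef.sqrt_eq_cfcSqrt {A : Matrix n n ℂ} (hA : A.PosSemidef) :
    hA.sqrt = CFC.sqrt A := by
  rw [CFC.sqrt_eq_real_sqrt A hA.nonneg, cfcₙ_eq_cfc, hA.1.cfc_eq, IsHermitian.cfc,
    Unitary.conjStarAlgAut_apply]
  rfl

lemma re_trace_mul_nonneg {X Y : Matrix n n ℂ} (hX : 0 ≤ X) (hY : 0 ≤ Y) :
    0 ≤ (X * Y).trace.re := by
  have hR : IsSelfAdjoint (CFC.sqrt X) := (CFC.sqrt_nonneg X).isSelfAdjoint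
  rw [← CFC.sqrt_mul_sqrt_self X hX, mul_assoc, trace_mul_comm]
  simpa only [hR.star_eq] using re_trace_nonneg (star_left_conjugate_nonneg hY (CFC.sqrt X))

/-- Cauchy–Schwarz for the Frobenius inner product `⟪X, Y⟫ = tr (Y Xᴴ)` of
`toMatrixInnerProductSpace 1`. -/
lemma re_trace_mul_conjTranspose_le (X Y : Matrix n n ℂ) :
    (Y * Xᴴ).trace.re ≤ √(X * Xᴴ).trace.re * √(Y * Yᴴ).trace.re := by
  let _ : SeminormedAddCommGroup (Matrix n n ℂ) := toMatrixSeminormedAddCommGroup 1 .one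
  let _ : InnerProductSpace ℂ (Matrix n n ℂ) := toMatrixInnerProductSpace 1 .one
  have h := re_inner_le_norm (𝕜 := ℂ) X Y
  rw [norm_eq_sqrt_re_inner (𝕜 := ℂ) X, norm_eq_sqrt_re_inner (𝕜 := ℂ) Y] at h
  change (Y * 1 * Xᴴ).trace.re ≤ √(X * 1 * Xᴴ).trace.re * √(Y * 1 * Yᴴ).trace.re at h
  simpa only [mul_one] using h

lemma trace_eq_sum_inner (A : Matrix n n ℂ) (b : OrthonormalBasis n ℂ (EuclideanSpace ℂ n)) :
    A.trace = ∑ i, ⟪b i, toEuclideanLin A (b i)⟫_ℂ := by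
  rw [← LinearMap.trace_eq_sum_inner, toEuclideanLin, toLpLin_eq_toLin, trace_toLin_eq]

lemma IsHermitian.toEuclideanLin_eigenvectorBasis {A : Matrix n n ℂ} (hA : A.IsHermitian)
    (j : n) :
    toEuclideanLin A (hA.eigenvectorBasis j) = (hA.eigenvalues j : ℂ) • hA.eigenvectorBasis j := by
  ext i
  simp [toLpLin_apply, hA.mulVec_eigenvectorBasis, Complex.real_smul]

lemma toEuclideanLin_mul_apply (A B : Matrix n n ℂ) (x : EuclideanSpace ℂ n) :
    toEuclideanLin (A * B) x = toEuclideanLin A (toEuclideanLin B x) := by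
  simp

lemma norm_toEuclideanLin_sq (A : Matrix n n ℂ) (x : EuclideanSpace ℂ n) :
    ‖toEuclideanLin A x‖ ^ 2 = RCLike.re ⟪x, toEuclideanLin (Aᴴ * A) x⟫_ℂ := by
  rw [toEuclideanLin_mul_apply, toEuclideanLin_conjTranspose_eq_adjoint,
    LinearMap.adjoint_inner_right, inner_self_eq_norm_sq]

lemma norm_toEuclideanLin_le_norm {W : Matrix n n ℂ} (hW : Wᴴ * W ≤ 1)
    (x : EuclideanSpace ℂ n) : ‖toEuclideanLin W x‖ ≤ ‖x‖ := by
  have hpos := (isPositive_toEuclideanLin_iff.mpr (le_iff.mp hW)).re_inner_nonneg_right x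
  rw [map_sub, LinearMap.sub_apply, inner_sub_right, map_sub, ← norm_toEuclideanLin_sq,
    toEuclideanLin, toLpLin_one, LinearMap.id_apply, inner_self_eq_norm_sq, sub_nonneg] at hpos
  exact le_of_sq_le_sq hpos (norm_nonneg x)

noncomputable def nonnegSpectralProj (H : Matrix n n ℂ) : Matrix n n ℂ :=
  cfc (fun t : ℝ => if 0 ≤ t then 1 else 0) H

lemma isStarProjection_nonnegSpectralProj (H : Matrix n n ℂ) :
    IsStarProjection (nonnegSpectralProj H) where
  isIdempotentElem := by
    rw [IsIdempotentElem, nonnegSpectralProj, ← cfc_mul _ _ _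
      (finite_real_spectrum.continuousOn _) (finite_real_spectrum.continuousOn _)]
    exact cfc_congr fun t _ => by split_ifs <;> norm_num
  isSelfAdjoint := cfc_predicate _ _

variable {H : Matrix n n ℂ}

lemma commute_nonnegSpectralProj (hH : H.IsHermitian) : Commute (nonnegSpectralProj H) H := by
  have h := cfc_commute_cfc (fun t : ℝ => if 0 ≤ t then 1 else 0) id H
  rwa [cfc_id ℝ H hH.isSelfAdjoint] at h

lemma nonneg_nonnegSpectralProj_mul (hH : H.IsHermitian) : 0 ≤ nonnegSpectralProj H * H := by
  have h : nonnegSpectralProj H * H = cfc (fun t : ℝ => (if 0 ≤ t then 1 else 0) * t) H := by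
    rw [cfc_mul _ _ _ (finite_real_spectrum.continuousOn _), cfc_id' ℝ H hH.isSelfAdjoint]
    rfl
  rw [h]
  exact cfc_nonneg fun t _ => by split_ifs <;> linarith

lemma nonneg_nonnegSpectralProj_sub_one_mul (hH : H.IsHermitian) :
    0 ≤ (nonnegSpectralProj H - 1) * H := by
  have h : (nonnegSpectralProj H - 1) * H =
      cfc (fun t : ℝ => ((if 0 ≤ t then 1 else 0) - 1) * t) H := by
    rw [cfc_mul _ _ _ (finite_real_spectrum.continuousOn _),
      cfc_sub _ _ _ (finite_real_spectrum.continuousOn _), cfc_const_one ℝ H,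
      cfc_id' ℝ H hH.isSelfAdjoint]
    rfl
  rw [h]
  exact cfc_nonneg fun t _ => by split_ifs <;> linarith

end Matrix

section TraceNorm

variable {n : Type*} [Fintype n] [DecidableEq n]

lemma traceNorm_eq_re_trace_cfcSqrt (A : Matrix n n ℂ) :
    traceNorm A = (CFC.sqrt (Aᴴ * A)).trace.re := by
  rw [traceNorm, PosSemidef.sqrt_eq_cfcSqrt]

lemma traceNorm_eq_sum_sqrt_eigenvalues (A : Matrix n n ℂ) :
    traceNorm A = ∑ i, √((posSemidef_conjTranspose_mul_self A).1.eigenvalues i) := by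
  rw [traceNorm, PosSemidef.sqrt, trace_mul_cycle, Unitary.coe_star_mul_self, one_mul,
    trace_diagonal, Complex.re_sum]
  rfl

lemma traceNorm_neg (A : Matrix n n ℂ) : traceNorm (-A) = traceNorm A := by
  simp [traceNorm_eq_re_trace_cfcSqrt]

lemma traceNorm_of_nonneg {A : Matrix n n ℂ} (hA : 0 ≤ A) : traceNorm A = A.trace.re := by
  rw [traceNorm_eq_re_trace_cfcSqrt, ← star_eq_conjTranspose, hA.isSelfAdjoint.star_eq,
    CFC.sqrt_mul_self A hA]

/-- In an eigenbasis `eₖ` of `AᴴA` with eigenvalues `λₖ`: `‖A eₖ‖ = √λₖ` and `‖Wᴴ eₖ‖ ≤ 1`. -/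
lemma re_trace_mul_le_traceNorm {W : Matrix n n ℂ} (hW : W * Wᴴ ≤ 1) (A : Matrix n n ℂ) :
    (W * A).trace.re ≤ traceNorm A := by
  set hM := (posSemidef_conjTranspose_mul_self A).1
  set e := hM.eigenvectorBasis
  rw [trace_eq_sum_inner _ e, Complex.re_sum, traceNorm_eq_sum_sqrt_eigenvalues]
  refine Finset.sum_le_sum fun k _ => ?_
  have hAe : ‖toEuclideanLin A (e k)‖ = √(hM.eigenvalues k) := by
    rw [← Real.sqrt_sq (norm_nonneg _), norm_toEuclideanLin_sq,
      hM.toEuclideanLin_eigenvectorBasis, inner_smul_right,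
      inner_self_eq_one_of_norm_eq_one (e.orthonormal.1 k)]
    simp
  have hWe : ‖toEuclideanLin Wᴴ (e k)‖ ≤ 1 :=
    (norm_toEuclideanLin_le_norm (by rwa [conjTranspose_conjTranspose]) (e k)).trans_eq
      (e.orthonormal.1 k)
  calc (⟪e k, toEuclideanLin (W * A) (e k)⟫_ℂ).re
      = RCLike.re ⟪toEuclideanLin Wᴴ (e k), toEuclideanLin A (e k)⟫_ℂ := by
        rw [toEuclideanLin_mul_apply, toEuclideanLin_conjTranspose_eq_adjoint,
          LinearMap.adjoint_inner_left]
        rfl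
    _ ≤ ‖toEuclideanLin Wᴴ (e k)‖ * ‖toEuclideanLin A (e k)‖ := re_inner_le_norm _ _
    _ ≤ √(hM.eigenvalues k) := by
        rw [hAe]
        exact mul_le_of_le_one_left (Real.sqrt_nonneg _) hWe

/-- The witness is `W = (AᴴA)^{-1/2} Aᴴ`, the adjoint of the partial isometry in the polar
decomposition of `A`; the junk value `(√0)⁻¹ = 0` makes `(AᴴA)^{-1/2}` a pseudo-inverse. -/
lemma exists_re_trace_mul_eq_traceNorm (A : Matrix n n ℂ) :
    ∃ W : Matrix n n ℂ, W * Wᴴ ≤ 1 ∧ (W * A).trace.re = traceNorm A := by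
  have hM : 0 ≤ Aᴴ * A := (posSemidef_conjTranspose_mul_self A).nonneg
  set D := cfc (fun t : ℝ => (√t)⁻¹) (Aᴴ * A)
  have hDM : D * (Aᴴ * A) = CFC.sqrt (Aᴴ * A) := by
    rw [CFC.sqrt_eq_real_sqrt _ hM, cfcₙ_eq_cfc]
    conv_lhs => rw [← cfc_id' ℝ (Aᴴ * A) hM.isSelfAdjoint]
    rw [← cfc_mul _ _ _ (finite_real_spectrum.continuousOn _)]
    exact cfc_congr fun t _ => by rw [inv_mul_eq_div, Real.div_sqrt]
  refine ⟨D * Aᴴ, ?_, ?_⟩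
  · have hD : Dᴴ = D := IsSelfAdjoint.star_eq (cfc_predicate (R := ℝ) _ (Aᴴ * A))
    rw [conjTranspose_mul, conjTranspose_conjTranspose, hD,
      show D * Aᴴ * (A * D) = D * (Aᴴ * A) * D by simp only [mul_assoc], hDM,
      CFC.sqrt_eq_real_sqrt _ hM, cfcₙ_eq_cfc, ← cfc_mul _ _ _
        (finite_real_spectrum.continuousOn _) (finite_real_spectrum.continuousOn _)]
    exact cfc_le_one _ _ fun t _ => mul_inv_le_one
  · rw [mul_assoc, hDM, traceNorm_eq_re_trace_cfcSqrt]

lemma re_trace_le_traceNorm (A : Matrix n n ℂ) : A.trace.re ≤ traceNorm A := by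
  simpa using re_trace_mul_le_traceNorm (W := 1) (by simp) A

lemma traceNorm_add_le (A B : Matrix n n ℂ) : traceNorm (A + B) ≤ traceNorm A + traceNorm B := by
  obtain ⟨W, hW, hWAB⟩ := exists_re_trace_mul_eq_traceNorm (A + B)
  rw [← hWAB, mul_add, trace_add, Complex.add_re]
  exact add_le_add (re_trace_mul_le_traceNorm hW A) (re_trace_mul_le_traceNorm hW B)

lemma traceNorm_mul_le (B C : Matrix n n ℂ) :
    traceNorm (B * C) ≤ √(Bᴴ * B).trace.re * √(C * Cᴴ).trace.re := by
  obtain ⟨W, hW, hWBC⟩ := exists_re_trace_mul_eq_traceNorm (B * C)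
  have hCW : ((C * W) * (C * W)ᴴ).trace.re ≤ (C * Cᴴ).trace.re := by
    rw [conjTranspose_mul, show C * W * (Wᴴ * Cᴴ) = C * (W * Wᴴ) * Cᴴ by simp only [mul_assoc]]
    simpa [star_eq_conjTranspose] using
      re_trace_le_re_trace (star_right_conjugate_le_conjugate hW C)
  calc traceNorm (B * C) = (C * W * Bᴴᴴ).trace.re := by
        rw [← hWBC, conjTranspose_conjTranspose, ← mul_assoc, trace_mul_cycle]
    _ ≤ √(Bᴴ * Bᴴᴴ).trace.re * √((C * W) * (C * W)ᴴ).trace.re :=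
        re_trace_mul_conjTranspose_le _ _
    _ ≤ √(Bᴴ * B).trace.re * √(C * Cᴴ).trace.re := by
        rw [conjTranspose_conjTranspose]
        gcongr

lemma traceNorm_mul_mul_le_of_isStarProjection {P : Matrix n n ℂ} (hP : IsStarProjection P)
    (X Y : Matrix n n ℂ) :
    traceNorm (X * P * Y) ≤ √(P * (Xᴴ * X)).trace.re * √(P * (Y * Yᴴ)).trace.re := by
  have hPh : Pᴴ = P := hP.isSelfAdjoint.star_eq
  have hPP : P * P = P := hP.isIdempotentElem.eq
  have hX : ((X * P)ᴴ * (X * P)).trace = (P * (Xᴴ * X)).trace := by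
    rw [conjTranspose_mul, hPh, show P * Xᴴ * (X * P) = P * (Xᴴ * X) * P by simp only [mul_assoc],
      trace_mul_comm, ← mul_assoc, hPP]
  have hY : ((P * Y) * (P * Y)ᴴ).trace = (P * (Y * Yᴴ)).trace := by
    rw [conjTranspose_mul, hPh, show P * Y * (Yᴴ * P) = P * (Y * Yᴴ) * P by simp only [mul_assoc],
      trace_mul_comm, ← mul_assoc, hPP]
  have hXPY : X * P * Y = X * P * (P * Y) := by rw [← mul_assoc, mul_assoc X P P, hPP]
  rw [hXPY, ← hX, ← hY]
  exact traceNorm_mul_le _ _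

lemma re_trace_reflection_mul_le_traceNorm {P : Matrix n n ℂ} (hP : IsStarProjection P)
    (A : Matrix n n ℂ) : ((2 * P - 1) * A).trace.re ≤ traceNorm A :=
  re_trace_mul_le_traceNorm (Unitary.mul_star_self_of_mem hP.two_mul_sub_one_mem_unitary).le A

lemma traceNorm_eq_of_isHermitian {H : Matrix n n ℂ} (hH : H.IsHermitian) :
    traceNorm H = ((2 * nonnegSpectralProj H - 1) * H).trace.re := by
  set P := nonnegSpectralProj H
  have key : traceNorm H ≤ ((2 * P - 1) * H).trace.re := calc
    traceNorm H = traceNorm (P * H + -((P - 1) * H)) := by congr 1; noncomm_ring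
    _ ≤ traceNorm (P * H) + traceNorm (-((P - 1) * H)) := traceNorm_add_le _ _
    _ = (P * H).trace.re + ((P - 1) * H).trace.re := by
        rw [traceNorm_neg, traceNorm_of_nonneg (nonneg_nonnegSpectralProj_mul hH),
          traceNorm_of_nonneg (nonneg_nonnegSpectralProj_sub_one_mul hH)]
    _ = ((2 * P - 1) * H).trace.re := by
        rw [← Complex.add_re, ← trace_add]
        congr 2
        noncomm_ring
  exact le_antisymm key
    (re_trace_reflection_mul_le_traceNorm (isStarProjection_nonnegSpectralProj H) H)

/-- The Powers–Størmer inequality. With `C = S - T`, `P` the spectral projection onto `C ≥ 0`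
and `U = 2P - 1`, which commutes with `C`: `tr U (S² - T²) = tr U C (S + T)
= tr C² + 2 tr (P C) T + 2 tr ((P - 1) C) S`, and both `P C` and `(P - 1) C` are `≥ 0`. -/
lemma re_trace_sub_mul_sub_le_traceNorm {S T : Matrix n n ℂ} (hS : 0 ≤ S) (hT : 0 ≤ T) :
    ((S - T) * (S - T)).trace.re ≤ traceNorm (S * S - T * T) := by
  have hC : (S - T).IsHermitian := (hS.isSelfAdjoint.sub hT.isSelfAdjoint).isHermitian
  set P := nonnegSpectralProj (S - T)
  have hUC : Commute (2 * P - 1) (S - T) :=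
    ((Commute.ofNat_left 2 _).mul_left (commute_nonnegSpectralProj hC)).sub_left
      (Commute.one_left _)
  have hsym : ((2 * P - 1) * ((S + T) * (S - T))).trace =
      ((2 * P - 1) * (S - T) * (S + T)).trace := by
    rw [← mul_assoc, trace_mul_cycle, ← hUC.eq]
  have htr : ((2 * P - 1) * (S * S - T * T)).trace =
      ((2 * P - 1) * (S - T) * (S + T)).trace := by
    have h := congrArg trace (show (2 * P - 1) * (S * S - T * T) + (2 * P - 1) * (S * S - T * T) =
      (2 * P - 1) * (S - T) * (S + T) + (2 * P - 1) * ((S + T) * (S - T)) by noncomm_ring)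
    rw [trace_add, trace_add, hsym] at h
    linear_combination h / 2
  have hdecomp : (2 * P - 1) * (S - T) * (S + T) = (S - T) * (S - T) +
      (P * (S - T) * T + P * (S - T) * T) + ((P - 1) * (S - T) * S + (P - 1) * (S - T) * S) := by
    noncomm_ring
  have hPC := re_trace_mul_nonneg (nonneg_nonnegSpectralProj_mul hC) hT
  have hQC := re_trace_mul_nonneg (nonneg_nonnegSpectralProj_sub_one_mul hC) hS
  calc ((S - T) * (S - T)).trace.re ≤ ((2 * P - 1) * (S * S - T * T)).trace.re := by
        simp only [htr, hdecomp, trace_add, Complex.add_re]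
        linarith
    _ ≤ traceNorm (S * S - T * T) :=
        re_trace_reflection_mul_le_traceNorm (isStarProjection_nonnegSpectralProj _) _

lemma traceNorm_mul_le_of_isStarProjection {S₀ S₁ P : Matrix n n ℂ} (hS₀ : S₀ᴴ = S₀)
    (hS₁ : S₁ᴴ = S₁) (hP : IsStarProjection P) :
    traceNorm (S₀ * S₁) ≤ √(P * (S₀ * S₀)).trace.re * √(P * (S₁ * S₁)).trace.re +
      √((1 - P) * (S₀ * S₀)).trace.re * √((1 - P) * (S₁ * S₁)).trace.re := by
  have h := traceNorm_mul_mul_le_of_isStarProjection hP S₀ S₁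
  have h' := traceNorm_mul_mul_le_of_isStarProjection hP.one_sub S₀ S₁
  rw [hS₀, hS₁] at h h'
  calc traceNorm (S₀ * S₁) = traceNorm (S₀ * P * S₁ + S₀ * (1 - P) * S₁) := by
        congr 1
        noncomm_ring
    _ ≤ _ := (traceNorm_add_le _ _).trans (add_le_add h h')

end TraceNorm

lemma sqrt_mul_sqrt_add_sqrt_mul_sqrt_le {p q : ℝ} (hp₀ : 0 ≤ p) (hp₁ : p ≤ 1) (hq₀ : 0 ≤ q)
    (hq₁ : q ≤ 1) : √p * √q + √(1 - p) * √(1 - q) ≤ √(1 - (p - q) ^ 2) := by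
  have hp := Real.sq_sqrt hp₀
  have hq := Real.sq_sqrt hq₀
  have hp' := Real.sq_sqrt (sub_nonneg.mpr hp₁)
  have hq' := Real.sq_sqrt (sub_nonneg.mpr hq₁)
  calc _ = √((√p * √q + √(1 - p) * √(1 - q)) ^ 2) := (Real.sqrt_sq (by positivity)).symm
    _ ≤ _ := Real.sqrt_le_sqrt (by nlinarith [sq_nonneg (√p * √(1 - p) - √q * √(1 - q))])

section Fidelity

variable {n : Type*} [Fintype n] [DecidableEq n] {ρ₀ ρ₁ : Matrix n n ℂ}

lemma one_sub_half_traceNorm_le_fidelity (h₀ : IsDensity ρ₀) (h₁ : IsDensity ρ₁) :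
    1 - 1 / 2 * traceNorm (ρ₀ - ρ₁) ≤ fidelity h₀.1 h₁.1 := by
  have hS₀ := CFC.sqrt_mul_sqrt_self ρ₀ h₀.1.nonneg
  have hS₁ := CFC.sqrt_mul_sqrt_self ρ₁ h₁.1.nonneg
  have hPS := re_trace_sub_mul_sub_le_traceNorm (CFC.sqrt_nonneg ρ₀) (CFC.sqrt_nonneg ρ₁)
  have hexp : ((CFC.sqrt ρ₀ - CFC.sqrt ρ₁) * (CFC.sqrt ρ₀ - CFC.sqrt ρ₁)).trace.re =
      2 - 2 * (CFC.sqrt ρ₀ * CFC.sqrt ρ₁).trace.re := by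
    rw [sub_mul, mul_sub, mul_sub, hS₀, hS₁]
    simp only [trace_sub, Complex.sub_re, trace_mul_comm (CFC.sqrt ρ₁), h₀.2, h₁.2,
      Complex.one_re]
    ring
  have hF : (CFC.sqrt ρ₀ * CFC.sqrt ρ₁).trace.re ≤ fidelity h₀.1 h₁.1 := by
    rw [fidelity, PosSemidef.sqrt_eq_cfcSqrt, PosSemidef.sqrt_eq_cfcSqrt]
    exact re_trace_le_traceNorm _
  rw [hS₀, hS₁, hexp] at hPS
  linarith

lemma fidelity_le_sqrt_one_sub_traceNorm_sq (h₀ : IsDensity ρ₀) (h₁ : IsDensity ρ₁) :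
    fidelity h₀.1 h₁.1 ≤ √(1 - 1 / 4 * traceNorm (ρ₀ - ρ₁) ^ 2) := by
  have hE := isStarProjection_nonnegSpectralProj (ρ₀ - ρ₁)
  set E := nonnegSpectralProj (ρ₀ - ρ₁)
  set p := (E * ρ₀).trace.re
  set q := (E * ρ₁).trace.re
  have hp : ((1 - E) * ρ₀).trace.re = 1 - p := by
    rw [sub_mul, one_mul, trace_sub, Complex.sub_re, h₀.2, Complex.one_re]
  have hq : ((1 - E) * ρ₁).trace.re = 1 - q := by
    rw [sub_mul, one_mul, trace_sub, Complex.sub_re, h₁.2, Complex.one_re]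
  have hT : traceNorm (ρ₀ - ρ₁) = 2 * (p - q) := by
    rw [traceNorm_eq_of_isHermitian (h₀.1.1.sub h₁.1.1), show (2 * E - 1) * (ρ₀ - ρ₁) =
      E * ρ₀ + E * ρ₀ - (E * ρ₁ + E * ρ₁) - ρ₀ + ρ₁ by noncomm_ring]
    simp only [trace_add, trace_sub, Complex.add_re, Complex.sub_re, h₀.2, h₁.2]
    ring
  have hF := traceNorm_mul_le_of_isStarProjection (CFC.sqrt_nonneg ρ₀).isSelfAdjoint.star_eq
    (CFC.sqrt_nonneg ρ₁).isSelfAdjoint.star_eq hE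
  rw [CFC.sqrt_mul_sqrt_self ρ₀ h₀.1.nonneg, CFC.sqrt_mul_sqrt_self ρ₁ h₁.1.nonneg, hp, hq] at hF
  rw [fidelity, PosSemidef.sqrt_eq_cfcSqrt, PosSemidef.sqrt_eq_cfcSqrt]
  refine hF.trans ((sqrt_mul_sqrt_add_sqrt_mul_sqrt_le ?_ ?_ ?_ ?_).trans_eq ?_)
  · exact re_trace_mul_nonneg hE.nonneg h₀.1.nonneg
  · linarith [hp ▸ re_trace_mul_nonneg hE.one_sub_nonneg h₀.1.nonneg]
  · exact re_trace_mul_nonneg hE.nonneg h₁.1.nonneg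
  · linarith [hq ▸ re_trace_mul_nonneg hE.one_sub_nonneg h₁.1.nonneg]
  · rw [hT]
    congr 1
    ring

end Fidelity

/-- Fuchs–van de Graaf inequalities. -/
theorem fuchs_van_de_graaf {n : Type*} [Fintype n] [DecidableEq n]
    {ρ₀ ρ₁ : Matrix n n ℂ} (h₀ : IsDensity ρ₀) (h₁ : IsDensity ρ₁) :
    1 - (1 / 2) * traceNorm (ρ₀ - ρ₁) ≤ fidelity h₀.1 h₁.1 ∧
    fidelity h₀.1 h₁.1 ≤ Real.sqrt (1 - (1 / 4) * traceNorm (ρ₀ - ρ₁) ^ 2) :=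
  ⟨one_sub_half_traceNorm_le_fidelity h₀ h₁, fidelity_le_sqrt_one_sub_traceNorm_sq h₀ h₁⟩
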